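/- arXiv:2302.12855 — 2 statements merged into one kernel-verified Lean document; each statement's English description precedes it below -/
import Mathlib

section
/- Let n > d ≥ 1 and let A be a subset of {1,…,n+1} such that any two distinct elements of A differ by at least d. Then P(n+1, d) ≥ Σ_{i ∈ A} P_d({1,…,n+1} \ {i}). -/
/-- The Chebyshev distance between two functions `{1,…,m} → ℤ≥0`
(represented on `Fin m`): `max_i |σ(i) − τ(i)|`. -/
def cheb {m : ℕ} (σ τ : Fin m → ℕ) : ℕ :=
  Finset.univ.sup fun i => Nat.dist (σ i) (τ i)

/-- `Pd d S` is the maximum cardinality of a set of bijections from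
`{1,…,|S|}` onto the finite set `S` of integers (represented as injections
`Fin S.card → ℕ` with values in `S`) whose pairwise Chebyshev distance is at
least `d`. -/
noncomputable def Pd (d : ℕ) (S : Finset ℕ) : ℕ :=
  sSup {k | ∃ A : Finset (Fin S.card → ℕ),
    (∀ σ ∈ A, Function.Injective σ ∧ ∀ i, σ i ∈ S) ∧
    (∀ σ ∈ A, ∀ τ ∈ A, σ ≠ τ → d ≤ cheb σ τ) ∧ A.card = k}

/-- `P n d` is the maximum cardinality of a set of permutations of `{1,…,n}`
whose pairwise Chebyshev distance is at least `d`. -/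
noncomputable def P (n d : ℕ) : ℕ := Pd d (Finset.Icc 1 n)

/-!
Fix a permutation code `B i` of maximum size on `S \ {i}` for each `i ∈ A`, and append `i` as the
last value of every member of `B i`. The resulting words are bijections onto `S`. Two of them coming
from the same `i` are as far apart as before, and two coming from distinct `i ≠ j` differ by
`|i - j| ≥ d` in the last position, so together they form a code on `S` of size
`∑ i ∈ A, Pd d (S \ {i})`.
-/

lemma cheb_snoc {m : ℕ} (σ τ : Fin m → ℕ) (a b : ℕ) :
    cheb (Fin.snoc σ a : Fin (m + 1) → ℕ) (Fin.snoc τ b) = max (cheb σ τ) (Nat.dist a b) := by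
  simp only [cheb, Fin.univ_castSuccEmb, Finset.sup_cons, Finset.sup_map, Function.comp_def,
    Fin.coe_castSuccEmb, Fin.snoc_castSucc, Fin.snoc_last]
  exact sup_comm _ _

def IsPermCode {m : ℕ} (d : ℕ) (S : Finset ℕ) (B : Finset (Fin m → ℕ)) : Prop :=
  (∀ σ ∈ B, Function.Injective σ ∧ ∀ k, σ k ∈ S) ∧ ∀ σ ∈ B, ∀ τ ∈ B, σ ≠ τ → d ≤ cheb σ τ

section Pd

variable (d : ℕ) (S : Finset ℕ)

def permCodeSizes : Set ℕ :=
  {k | ∃ B : Finset (Fin S.card → ℕ), IsPermCode d S B ∧ B.card = k}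

lemma Pd_eq_sSup_permCodeSizes : Pd d S = sSup (permCodeSizes d S) := by
  simp only [Pd, permCodeSizes, IsPermCode, and_assoc]

lemma bddAbove_permCodeSizes : BddAbove (permCodeSizes d S) := by
  refine ⟨(Fintype.piFinset fun _ : Fin S.card => S).card, ?_⟩
  rintro k ⟨B, hB, rfl⟩
  exact Finset.card_le_card fun σ hσ => Fintype.mem_piFinset.mpr (hB.1 σ hσ).2

lemma exists_isPermCode_card_eq_Pd {m : ℕ} (hm : S.card = m) :
    ∃ B : Finset (Fin m → ℕ), IsPermCode d S B ∧ B.card = Pd d S := by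
  subst hm
  rw [Pd_eq_sSup_permCodeSizes]
  have hempty : IsPermCode d S (∅ : Finset (Fin S.card → ℕ)) := ⟨by simp, by simp⟩
  exact Nat.sSup_mem (s := permCodeSizes d S) ⟨0, ∅, hempty, rfl⟩ (bddAbove_permCodeSizes d S)

lemma IsPermCode.card_le_Pd {m : ℕ} {B : Finset (Fin m → ℕ)} (hB : IsPermCode d S B)
    (hm : m = S.card) : B.card ≤ Pd d S := by
  subst hm
  rw [Pd_eq_sSup_permCodeSizes]
  exact le_csSup (bddAbove_permCodeSizes d S) ⟨B, hB, rfl⟩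

end Pd

section Snoc

variable {m d : ℕ} {S A : Finset ℕ} {B : ℕ → Finset (Fin m → ℕ)}

lemma IsPermCode.biUnion_image_snoc (hB : ∀ i ∈ A, IsPermCode d (S.erase i) (B i))
    (hAS : A ⊆ S) (hdist : ∀ i ∈ A, ∀ j ∈ A, i ≠ j → d ≤ Nat.dist i j) :
    IsPermCode d S (A.biUnion fun i => (B i).image (Fin.snoc (α := fun _ => ℕ) · i)) := by
  simp only [IsPermCode, Finset.mem_biUnion, Finset.mem_image]
  refine ⟨?_, ?_⟩
  · rintro _ ⟨i, hi, σ, hσ, rfl⟩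
    obtain ⟨hinj, hval⟩ := (hB i hi).1 σ hσ
    refine ⟨Fin.snoc_injective_of_injective hinj ?_, Fin.lastCases ?_ fun k => ?_⟩
    · rintro ⟨k, hk⟩
      exact Finset.notMem_erase i S (hk ▸ hval k)
    · simpa only [Fin.snoc_last] using hAS hi
    · simpa only [Fin.snoc_castSucc] using Finset.mem_of_mem_erase (hval k)
  · rintro _ ⟨i, hi, σ, hσ, rfl⟩ _ ⟨j, hj, τ, hτ, rfl⟩ hne
    rw [cheb_snoc]
    by_cases hij : i = j
    · subst hij
      exact le_max_of_le_left ((hB i hi).2 σ hσ τ hτ fun h => hne (h ▸ rfl))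
    · exact le_max_of_le_right (hdist i hi j hj hij)

lemma card_biUnion_image_snoc :
    (A.biUnion fun i => (B i).image (Fin.snoc (α := fun _ => ℕ) · i)).card =
      ∑ i ∈ A, (B i).card := by
  rw [Finset.card_biUnion]
  · exact Finset.sum_congr rfl fun i _ =>
      Finset.card_image_of_injective _ (Fin.snoc_left_injective (α := fun _ => ℕ) i)
  · intro i _ j _ hij
    simp only [Function.onFun, Finset.disjoint_left, Finset.mem_image]
    rintro _ ⟨σ, -, rfl⟩ ⟨τ, -, h⟩
    exact hij (Fin.snoc_injective2 h).2.symm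

end Snoc

theorem sum_Pd_erase_le_Pd (d : ℕ) {S A : Finset ℕ} (hAS : A ⊆ S)
    (hdist : ∀ i ∈ A, ∀ j ∈ A, i ≠ j → d ≤ Nat.dist i j) :
    ∑ i ∈ A, Pd d (S.erase i) ≤ Pd d S := by
  rcases A.eq_empty_or_nonempty with rfl | ⟨i₀, hi₀⟩
  · simp
  obtain ⟨m, hm⟩ : ∃ m, S.card = m + 1 := ⟨_, (Finset.card_erase_add_one (hAS hi₀)).symm⟩
  have hcard : ∀ i ∈ A, (S.erase i).card = m := fun i hi => by
    rw [Finset.card_erase_of_mem (hAS hi), hm, Nat.add_sub_cancel]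
  choose! B hB hBcard using fun i (hi : i ∈ A) => exists_isPermCode_card_eq_Pd d _ (hcard i hi)
  calc ∑ i ∈ A, Pd d (S.erase i)
      = (A.biUnion fun i => (B i).image (Fin.snoc (α := fun _ => ℕ) · i)).card := by
        rw [card_biUnion_image_snoc]
        exact Finset.sum_congr rfl fun i hi => (hBcard i hi).symm
    _ ≤ Pd d S := (IsPermCode.biUnion_image_snoc hB hAS hdist).card_le_Pd d S hm.symm

theorem stmt1_general (n d : ℕ)
    (A : Finset ℕ) (hA : A ⊆ Finset.Icc 1 (n + 1))
    (hdist : ∀ i ∈ A, ∀ j ∈ A, i ≠ j → d ≤ Nat.dist i j) :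
    ∑ i ∈ A, Pd d ((Finset.Icc 1 (n + 1)).erase i) ≤ P (n + 1) d :=
  sum_Pd_erase_le_Pd d hA hdist

/-- Let `n > d ≥ 1` and let `A ⊆ {1,…,n+1}` with any two distinct elements of
`A` differing by at least `d`. Then
`P(n+1, d) ≥ Σ_{i ∈ A} P_d({1,…,n+1} \ {i})`. -/
theorem stmt1 (n d : ℕ) (hd : 1 ≤ d) (hn : d < n)
    (A : Finset ℕ) (hA : A ⊆ Finset.Icc 1 (n + 1))
    (hdist : ∀ i ∈ A, ∀ j ∈ A, i ≠ j → d ≤ Nat.dist i j) :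
    ∑ i ∈ A, Pd d ((Finset.Icc 1 (n + 1)).erase i) ≤ P (n + 1) d :=
  stmt1_general n d A hA hdist
end

section
/- Let n ≥ d ≥ 1 and m ≥ 1, and let A be any set of injective functions from {1,…,m} to {1,…,n+m} whose pairwise Chebyshev distance is at least d. For σ ∈ A let σ^C = {1,…,n+m} \ image(σ). Then P(n+m, d) ≥ Σ_{σ ∈ A} P_d(σ^C). -/
def IsChebCode (d : ℕ) (S : Finset ℕ) {k : ℕ} (A : Finset (Fin k → ℕ)) : Prop :=
  (∀ σ ∈ A, Function.Injective σ ∧ ∀ i, σ i ∈ S) ∧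
    ∀ σ ∈ A, ∀ τ ∈ A, σ ≠ τ → d ≤ cheb σ τ

lemma cheb_comp_le {a b : ℕ} (f g : Fin b → ℕ) (e : Fin a → Fin b) :
    cheb (f ∘ e) (g ∘ e) ≤ cheb f g :=
  Finset.sup_le fun i _ =>
    Finset.le_sup (f := fun j => Nat.dist (f j) (g j)) (Finset.mem_univ (e i))

lemma cheb_le_cheb_append_left {m k : ℕ} (σ σ' : Fin m → ℕ) (τ τ' : Fin k → ℕ) :
    cheb σ σ' ≤ cheb (Fin.append σ τ) (Fin.append σ' τ') := by
  simpa [Function.comp_def] using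
    cheb_comp_le (Fin.append σ τ) (Fin.append σ' τ') (Fin.castAdd k)

lemma cheb_le_cheb_append_right {m k : ℕ} (σ σ' : Fin m → ℕ) (τ τ' : Fin k → ℕ) :
    cheb τ τ' ≤ cheb (Fin.append σ τ) (Fin.append σ' τ') := by
  simpa [Function.comp_def] using
    cheb_comp_le (Fin.append σ τ) (Fin.append σ' τ') (Fin.natAdd m)

lemma Fin.append_inj {α : Type*} {m k : ℕ} {σ σ' : Fin m → α} {τ τ' : Fin k → α}
    (h : Fin.append σ τ = Fin.append σ' τ') : σ = σ' ∧ τ = τ' := by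
  refine ⟨funext fun i => ?_, funext fun i => ?_⟩
  · simpa using congrFun h (Fin.castAdd k i)
  · simpa using congrFun h (Fin.natAdd m i)

section Pd

variable (d : ℕ) (S : Finset ℕ)

lemma bddAbove_chebCode_cards :
    BddAbove {k | ∃ A : Finset (Fin S.card → ℕ),
      (∀ σ ∈ A, Function.Injective σ ∧ ∀ i, σ i ∈ S) ∧
      (∀ σ ∈ A, ∀ τ ∈ A, σ ≠ τ → d ≤ cheb σ τ) ∧ A.card = k} := by
  refine ⟨S.card ^ S.card, ?_⟩
  rintro _ ⟨A, hA, -, rfl⟩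
  have hsub : A ⊆ Fintype.piFinset fun _ => S := fun σ hσ =>
    Fintype.mem_piFinset.2 (hA σ hσ).2
  simpa using Finset.card_le_card hsub

variable {d S}

lemma exists_isChebCode_card_eq_Pd {k : ℕ} (hk : S.card = k) :
    ∃ A : Finset (Fin k → ℕ), IsChebCode d S A ∧ A.card = Pd d S := by
  subst hk
  obtain ⟨A, h₁, h₂, hcard⟩ :=
    Nat.sSup_mem (s := {k | ∃ A : Finset (Fin S.card → ℕ), _}) ⟨0, ∅, by simp⟩
      (bddAbove_chebCode_cards d S)
  exact ⟨A, ⟨h₁, h₂⟩, hcard⟩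

lemma IsChebCode.card_le_Pd {k : ℕ} (hk : S.card = k) {A : Finset (Fin k → ℕ)}
    (hA : IsChebCode d S A) : A.card ≤ Pd d S := by
  subst hk
  exact le_csSup (bddAbove_chebCode_cards d S) ⟨A, hA.1, hA.2, rfl⟩

end Pd

lemma card_sdiff_image_add {m : ℕ} {S : Finset ℕ} {σ : Fin m → ℕ}
    (hσ : Function.Injective σ) (hS : ∀ i, σ i ∈ S) :
    (S \ Finset.image σ Finset.univ).card + m = S.card := by
  have hsub : Finset.image σ Finset.univ ⊆ S := by
    simpa [Finset.image_subset_iff] using hS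
  rw [Finset.card_sdiff_of_subset hsub, Finset.card_image_of_injective _ hσ,
    Finset.card_univ, Fintype.card_fin]
  exact Nat.sub_add_cancel
    (by simpa [Finset.card_image_of_injective _ hσ] using Finset.card_le_card hsub)

section Gluing

variable {d m k : ℕ} {S : Finset ℕ} {A : Finset (Fin m → ℕ)}
  {B : (Fin m → ℕ) → Finset (Fin k → ℕ)}

lemma IsChebCode.sigma_append (hA : IsChebCode d S A)
    (hB : ∀ σ ∈ A, IsChebCode d (S \ Finset.image σ Finset.univ) (B σ)) :
    IsChebCode d S ((A.sigma B).image fun p => Fin.append p.1 p.2) := by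
  simp only [IsChebCode, Finset.mem_image, Finset.mem_sigma]
  constructor
  · rintro _ ⟨⟨σ, τ⟩, ⟨hσ, hτ⟩, rfl⟩
    obtain ⟨hσinj, hσS⟩ := hA.1 σ hσ
    obtain ⟨hτinj, hτS⟩ := (hB σ hσ).1 τ hτ
    have hτσ : ∀ i j, σ i ≠ τ j := fun i j h =>
      (Finset.mem_sdiff.1 (hτS j)).2 (h ▸ Finset.mem_image_of_mem σ (Finset.mem_univ i))
    refine ⟨Fin.append_injective_iff.2 ⟨hσinj, hτinj, hτσ⟩,
      Fin.addCases (fun i => ?_) fun j => ?_⟩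
    · simpa using hσS i
    · simpa using (Finset.mem_sdiff.1 (hτS j)).1
  · rintro _ ⟨⟨σ, τ⟩, ⟨hσ, hτ⟩, rfl⟩ _ ⟨⟨σ', τ'⟩, ⟨hσ', hτ'⟩, rfl⟩ hne
    by_cases h : σ = σ'
    · subst h
      have hττ' : τ ≠ τ' := by rintro rfl; exact hne rfl
      exact ((hB σ hσ).2 τ hτ τ' hτ' hττ').trans (cheb_le_cheb_append_right σ σ τ τ')
    · exact (hA.2 σ hσ σ' hσ' h).trans (cheb_le_cheb_append_left σ σ' τ τ')

lemma sum_card_le_Pd_of_isChebCode (hS : S.card = m + k) (hA : IsChebCode d S A)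
    (hB : ∀ σ ∈ A, IsChebCode d (S \ Finset.image σ Finset.univ) (B σ)) :
    ∑ σ ∈ A, (B σ).card ≤ Pd d S := by
  have hcard :
      ((A.sigma B).image fun p => Fin.append p.1 p.2).card = ∑ σ ∈ A, (B σ).card := by
    rw [Finset.card_image_of_injOn, Finset.card_sigma]
    rintro ⟨σ, τ⟩ - ⟨σ', τ'⟩ - h
    obtain ⟨rfl, rfl⟩ := Fin.append_inj h
    rfl
  exact hcard ▸ (hA.sigma_append hB).card_le_Pd hS

end Gluing

theorem stmt7_general (n d m : ℕ)
    (A : Finset (Fin m → ℕ))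
    (hinj : ∀ σ ∈ A, Function.Injective σ)
    (hval : ∀ σ ∈ A, ∀ i, σ i ∈ Finset.Icc 1 (n + m))
    (hdist : ∀ σ ∈ A, ∀ τ ∈ A, σ ≠ τ → d ≤ cheb σ τ) :
    ∑ σ ∈ A, Pd d (Finset.Icc 1 (n + m) \ Finset.image σ Finset.univ) ≤
      P (n + m) d := by
  have hA : IsChebCode d (Finset.Icc 1 (n + m)) A :=
    ⟨fun σ hσ => ⟨hinj σ hσ, hval σ hσ⟩, hdist⟩
  have hfiber : ∀ σ ∈ A, ∃ B : Finset (Fin n → ℕ),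
      IsChebCode d (Finset.Icc 1 (n + m) \ Finset.image σ Finset.univ) B ∧
        B.card = Pd d (Finset.Icc 1 (n + m) \ Finset.image σ Finset.univ) := by
    intro σ hσ
    refine exists_isChebCode_card_eq_Pd ?_
    have := card_sdiff_image_add (hinj σ hσ) (hval σ hσ)
    simp only [Nat.card_Icc, Nat.add_sub_cancel] at this
    omega
  choose! B hB hBcard using hfiber
  calc ∑ σ ∈ A, Pd d (Finset.Icc 1 (n + m) \ Finset.image σ Finset.univ)
      = ∑ σ ∈ A, (B σ).card := (Finset.sum_congr rfl hBcard).symm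
    _ ≤ P (n + m) d := sum_card_le_Pd_of_isChebCode (by simp [Nat.add_comm]) hA hB

/-- Let `n ≥ d ≥ 1`, `m ≥ 1`, and let `A` be a set of injective functions
from `{1,…,m}` to `{1,…,n+m}` with pairwise Chebyshev distance at least `d`.
With `σ^C = {1,…,n+m} \ image(σ)`, we have
`P(n+m, d) ≥ Σ_{σ ∈ A} P_d(σ^C)`. -/
theorem stmt7 (n d m : ℕ) (hd : 1 ≤ d) (hn : d ≤ n) (hm : 1 ≤ m)
    (A : Finset (Fin m → ℕ))
    (hinj : ∀ σ ∈ A, Function.Injective σ)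
    (hval : ∀ σ ∈ A, ∀ i, σ i ∈ Finset.Icc 1 (n + m))
    (hdist : ∀ σ ∈ A, ∀ τ ∈ A, σ ≠ τ → d ≤ cheb σ τ) :
    ∑ σ ∈ A, Pd d (Finset.Icc 1 (n + m) \ Finset.image σ Finset.univ) ≤
      P (n + m) d :=
  stmt7_general n d m A hinj hval hdist
end
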